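/- arXiv:1302.1834 — 2 statements merged into one kernel-verified Lean document; each statement's English description precedes it below -/
import Mathlib

section
/- Let V : [0,∞) → [0, V_∞) be a nondecreasing differentiable function with V(r) → V_∞ < ∞, and suppose there exist ε > 0, C > 0, R > 0 such that for all r sufficiently large, ε·(V_∞ − V(r − R)) + C·V'(r − R) > 2ε·(V_∞ − V(r)). If R is large enough that 2 − e^{−εR/C} > 1, then there exists L > 1 and r₀ such that V_∞ − V(r + (2n−1)R) ≤ L^{−n}·V_∞ for all n ∈ ℕ and r ≥ r₀; that is, V_∞ − V(r) decays exponentially in r. -/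
open Filter Topology

/-- If a nondecreasing differentiable `V` with `V → V_∞ < ∞` satisfies, for
some `ε, C, R > 0` and all large `r`,
`ε (V_∞ - V(r-R)) + C V'(r-R) > 2 ε (V_∞ - V(r))`, and `R` is so large that
`2 - e^{-εR/C} > 1`, then `V_∞ - V` decays exponentially:
there are `L > 1` and `r₀` with `V_∞ - V(r + (2n-1)R) ≤ L^{-n} V_∞` for all `n` and `r ≥ r₀`. -/
theorem stmt5 (V : ℝ → ℝ) (Vinf : ℝ)
    (hmono : MonotoneOn V (Set.Ici (0:ℝ)))
    (hdiff : Differentiable ℝ V)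
    (hrange : ∀ r ≥ (0:ℝ), 0 ≤ V r ∧ V r < Vinf)
    (hlim : Tendsto V atTop (nhds Vinf))
    (ε C R : ℝ) (hε : 0 < ε) (hC : 0 < C) (hR : 0 < R)
    (hineq : ∀ᶠ r in atTop,
      ε * (Vinf - V (r - R)) + C * deriv V (r - R) > 2 * ε * (Vinf - V r))
    (hRlarge : (1:ℝ) < 2 - Real.exp (-(ε * R / C))) :
    ∃ L > (1:ℝ), ∃ r₀ : ℝ, ∀ (m : ℕ) (r : ℝ), r₀ ≤ r →
      Vinf - V (r + (2 * (m:ℝ) - 1) * R) ≤ L ^ (-(m:ℤ)) * Vinf := by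
  obtain ⟨A, hA⟩ := eventually_atTop.mp hineq
  set E := Real.exp (-(ε * R / C)) with hE
  have hEpos : 0 < E := Real.exp_pos _
  set L := 2 - E with hLdef
  have hL : 1 < L := hRlarge
  have hL0 : 0 < L := by linarith
  -- Key step: one-step decay estimate
  have key : ∀ a : ℝ, 0 ≤ a → A ≤ a + R →
      L * (Vinf - V (a + 2*R)) ≤ Vinf - V a := by
    intro a ha haA
    set K := Vinf - V (a + 2*R) with hK
    set f : ℝ → ℝ := fun s => Real.exp (-(ε/C)*s) * (Vinf - V s - 2*K) with hf
    have hder : ∀ s : ℝ, HasDerivAt f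
        ((Real.exp (-(ε/C)*s) * (-(ε/C) * 1)) * (Vinf - V s - 2*K)
          + Real.exp (-(ε/C)*s) * (0 - deriv V s)) s := by
      intro s
      have h1 : HasDerivAt (fun x : ℝ => -(ε/C) * x) (-(ε/C) * 1) s :=
        (hasDerivAt_id s).const_mul _
      have h3 : HasDerivAt (fun x : ℝ => Vinf - V x - 2*K) (0 - deriv V s) s :=
        ((hasDerivAt_const s Vinf).sub (hdiff s).hasDerivAt).sub_const _
      exact h1.exp.mul h3
    have hanti : AntitoneOn f (Set.Icc a (a + R)) := by
      apply antitoneOn_of_deriv_nonpos (convex_Icc _ _)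
      · exact fun s _ => ((hder s).differentiableAt).continuousAt.continuousWithinAt
      · exact fun s _ => ((hder s).differentiableAt).differentiableWithinAt
      · intro s hs
        rw [interior_Icc] at hs
        rw [(hder s).deriv]
        have hsA : A ≤ s + R := by linarith [hs.1]
        have hmain := hA (s + R) hsA
        simp only [add_sub_cancel_right] at hmain
        have hmV : V (s + R) ≤ V (a + 2*R) := by
          apply hmono (Set.mem_Ici.mpr (by linarith [hs.1]))
            (Set.mem_Ici.mpr (by linarith)) (by linarith [hs.2])
        have hB : 0 < ε * (Vinf - V s) + C * deriv V s - 2*ε*K := by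
          simp only [hK]; nlinarith
        have hexp : 0 < Real.exp (-(ε/C)*s) := Real.exp_pos _
        have heq : (Real.exp (-(ε/C)*s) * (-(ε/C) * 1)) * (Vinf - V s - 2*K)
              + Real.exp (-(ε/C)*s) * (0 - deriv V s)
            = -(Real.exp (-(ε/C)*s) / C)
              * (ε * (Vinf - V s) + C * deriv V s - 2*ε*K) := by
          field_simp
          ring
        rw [heq]
        nlinarith [mul_pos (div_pos hexp hC) hB]
    have hfle : f (a + R) ≤ f a :=
      hanti (Set.mem_Icc.mpr ⟨le_refl a, by linarith⟩)
        (Set.mem_Icc.mpr ⟨by linarith, le_refl _⟩) (by linarith)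
    have hsplit : Real.exp (-(ε/C)*(a+R)) = Real.exp (-(ε/C)*a) * E := by
      rw [hE, ← Real.exp_add]
      congr 1
      field_simp
      ring
    set p := Real.exp (-(ε/C)*a) with hp
    have hppos : 0 < p := Real.exp_pos _
    have hfle' : p * E * (Vinf - V (a+R) - 2*K) ≤ p * (Vinf - V a - 2*K) := by
      have : f (a+R) = p * E * (Vinf - V (a+R) - 2*K) := by
        simp only [hf, hsplit]
      rw [this] at hfle
      exact hfle
    have hmV2 : V (a + R) ≤ V (a + 2*R) := by
      apply hmono (Set.mem_Ici.mpr (by linarith)) (Set.mem_Ici.mpr (by linarith))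
        (by linarith)
    have hKle : K ≤ Vinf - V (a + R) := by simp only [hK]; linarith
    have h2 : 0 ≤ p * E * ((Vinf - V (a+R)) - K) :=
      mul_nonneg (mul_pos hppos hEpos).le (by linarith)
    -- from hfle' and h2 : p * ((Vinf - V a) - (2 - E) * K) ≥ 0
    have h3 : 0 ≤ p * ((Vinf - V a) - L * K) := by
      simp only [hLdef]; nlinarith
    nlinarith
  -- Iterate the key step
  refine ⟨L, hL, max A 0 + R, ?_⟩
  intro m r hr
  set a := r - R with haa
  have ha0 : 0 ≤ a := by
    have := le_max_right A 0; simp only [haa]; linarith [le_trans (by linarith [le_max_right A 0] : max A 0 + R ≤ r) (le_refl r), hr]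
  have haA : A ≤ a := by
    have := le_max_left A 0; simp only [haa]; linarith
  have claim : ∀ n : ℕ, L^n * (Vinf - V (a + 2*(n:ℝ)*R)) ≤ Vinf := by
    intro n
    induction n with
    | zero =>
        simp only [Nat.cast_zero, pow_zero, one_mul, mul_zero, zero_mul, add_zero]
        linarith [(hrange a ha0).1]
    | succ n ih =>
        have hn0 : (0:ℝ) ≤ 2*(n:ℝ)*R := by positivity
        have hk := key (a + 2*(n:ℝ)*R) (by linarith) (by linarith)
        have heq : a + 2*((n:ℕ):ℝ)*R + 2*R = a + 2*(((n+1:ℕ)):ℝ)*R := by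
          push_cast; ring
        rw [heq] at hk
        calc L^(n+1) * (Vinf - V (a + 2*(((n+1:ℕ)):ℝ)*R))
            = L^n * (L * (Vinf - V (a + 2*(((n+1:ℕ)):ℝ)*R))) := by ring
          _ ≤ L^n * (Vinf - V (a + 2*(n:ℝ)*R)) :=
              mul_le_mul_of_nonneg_left hk (pow_nonneg hL0.le n)
          _ ≤ Vinf := ih
  have hpt : r + (2 * (m:ℝ) - 1) * R = a + 2*(m:ℝ)*R := by
    simp only [haa]; ring
  rw [hpt, zpow_neg, zpow_natCast]
  have hpm : 0 < L^m := pow_pos hL0 m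
  rw [inv_mul_eq_div, le_div_iff₀ hpm, mul_comm]
  exact claim m
end

section
/- Let H be a nonnegative self-adjoint operator on a Hilbert space 𝓗 and λ ≥ 0. If there exists a sequence {u_i} ⊂ dom(H) with ‖u_i‖ = 1, ⟨(H+1)^{−1}u_i, (H−λ)u_i⟩ → 0, ⟨u_i, (H−λ)u_i⟩ → 0, and u_i → 0 weakly, then λ belongs to the essential spectrum of H. -/
/-
`u i` is a Weyl sequence for `λ`. Put `w i = u i - (1 + λ) (H + 1)⁻¹ u i`, so that
`(H + 1) w i = (H - λ) u i`. Accretivity of `H` gives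
`‖w i‖² ≤ Re ⟪w i, (H + 1) w i⟫ = ⟪u i, (H - λ) u i⟫ - (1 + λ) ⟪(H + 1)⁻¹ u i, (H - λ) u i⟫ → 0`,
hence `‖(H - λ) u i‖ ≤ (‖H‖ + 1) ‖w i‖ → 0`.

Weyl's criterion then applies. `λ` lies in the spectrum, since off the spectrum `H - λ` is bounded
below. If `λ` were isolated, `G = cfc (fun w => (w - λ)⁻¹) H` would be well defined (the junk
value `0⁻¹ = 0` at `λ` is harmless there), and `T G T = T` for `T = H - λ`. So `u i - G T u i`
lies in the eigenspace of `λ`; if that is finite-dimensional, this weakly null sequence tends to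
zero in norm, as does `G T u i`, which contradicts `‖u i‖ = 1`.
-/

open Filter Topology

variable {𝓗 : Type*} [NormedAddCommGroup 𝓗] [InnerProductSpace ℂ 𝓗] [CompleteSpace 𝓗]

/-- The essential spectrum of an operator: the spectrum with the isolated eigenvalues of
finite multiplicity removed. -/
def essSpectrum (H : 𝓗 →L[ℂ] 𝓗) : Set ℂ :=
  spectrum ℂ H \
    {z | z ∈ spectrum ℂ H ∧ z ∉ closure (spectrum ℂ H \ {z}) ∧
      FiniteDimensional ℂ (Module.End.eigenspace (H : 𝓗 →ₗ[ℂ] 𝓗) z)}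

section Spectrum

variable {𝕜 E : Type*} [NontriviallyNormedField 𝕜] [NormedAddCommGroup E] [NormedSpace 𝕜 E]

lemma exists_norm_le_mul_norm_sub_smul_of_notMem_spectrum {T : E →L[𝕜] E} {μ : 𝕜}
    (hμ : μ ∉ spectrum 𝕜 T) :
    ∃ C, ∀ x, ‖x‖ ≤ C * ‖T x - μ • x‖ := by
  obtain ⟨e, he⟩ := spectrum.notMem_iff.mp hμ
  refine ⟨‖(↑e⁻¹ : E →L[𝕜] E)‖, fun x => ?_⟩
  have he_apply : (e : E →L[𝕜] E) x = -(T x - μ • x) := by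
    simp [he, Algebra.algebraMap_eq_smul_one]
  calc ‖x‖ = ‖(↑e⁻¹ : E →L[𝕜] E) ((e : E →L[𝕜] E) x)‖ := by
        rw [← ContinuousLinearMap.comp_apply, ← ContinuousLinearMap.mul_def, e.inv_mul]; rfl
    _ ≤ ‖(↑e⁻¹ : E →L[𝕜] E)‖ * ‖(e : E →L[𝕜] E) x‖ := ContinuousLinearMap.le_opNorm _ _
    _ = ‖(↑e⁻¹ : E →L[𝕜] E)‖ * ‖T x - μ • x‖ := by rw [he_apply, norm_neg]

lemma mem_spectrum_of_tendsto_norm_sub_smul {ι : Type*} {l : Filter ι} [l.NeBot]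
    {T : E →L[𝕜] E} {μ : 𝕜} {u : ι → E} (hnorm : ∀ i, ‖u i‖ = 1)
    (hu : Tendsto (fun i => ‖T (u i) - μ • u i‖) l (𝓝 0)) : μ ∈ spectrum 𝕜 T := by
  by_contra hμ
  obtain ⟨C, hC⟩ := exists_norm_le_mul_norm_sub_smul_of_notMem_spectrum hμ
  have hCu : Tendsto (fun i => C * ‖T (u i) - μ • u i‖) l (𝓝 0) := by
    simpa using hu.const_mul C
  obtain ⟨i, hi⟩ := (hCu.eventually_lt_const one_pos).exists
  linarith [hC (u i), hnorm i]

end Spectrum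

lemma continuousWithinAt_of_notMem_closure_diff {X Y : Type*} [TopologicalSpace X]
    [TopologicalSpace Y] {f : X → Y} {s : Set X} {x : X} (hx : x ∉ closure (s \ {x})) :
    ContinuousWithinAt f s x := by
  rw [← continuousWithinAt_sdiff_self, ContinuousWithinAt,
    not_neBot.mp (mt mem_closure_iff_nhdsWithin_neBot.mpr hx)]
  exact tendsto_bot

lemma continuousOn_inv_sub_of_notMem_closure {s : Set ℂ} {z : ℂ}
    (hz : z ∉ closure (s \ {z})) : ContinuousOn (fun w => (w - z)⁻¹) s := by
  intro w hw
  rcases eq_or_ne w z with rfl | hwz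
  · exact continuousWithinAt_of_notMem_closure_diff hz
  · exact ((continuous_id.sub continuous_const).continuousAt.inv₀
      (sub_ne_zero.mpr hwz)).continuousWithinAt

lemma sub_mul_cfc_inv_sub_mul_sub {A : Type*} [CStarAlgebra A] (a : A) [IsStarNormal a] {z : ℂ}
    (hz : z ∉ closure (spectrum ℂ a \ {z})) :
    (a - algebraMap ℂ A z) * cfc (fun w => (w - z)⁻¹) a * (a - algebraMap ℂ A z)
      = a - algebraMap ℂ A z := by
  have hsub : cfc (fun w : ℂ => w - z) a = a - algebraMap ℂ A z := by
    rw [cfc_sub _ _ a, cfc_id' ℂ a, cfc_const z a]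
  have hcont : ContinuousOn (fun w : ℂ => w - z) (spectrum ℂ a) := by fun_prop
  have hinv := continuousOn_inv_sub_of_notMem_closure hz (s := spectrum ℂ a)
  rw [← hsub, ← cfc_mul _ _ a hcont hinv,
    ← cfc_mul (fun w => (w - z) * (w - z)⁻¹) _ a (hcont.mul hinv) hcont]
  exact cfc_congr fun w _ => mul_inv_mul_cancel (w - z)

section InnerProductSpace

variable {𝕜 E : Type*} [RCLike 𝕜] [NormedAddCommGroup E] [InnerProductSpace 𝕜 E]
  {ι : Type*} {l : Filter ι}

lemma tendsto_zero_of_forall_inner_tendsto_zero [FiniteDimensional 𝕜 E] {q : ι → E}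
    (hq : ∀ y, Tendsto (fun i => inner 𝕜 (q i) y) l (𝓝 0)) : Tendsto q l (𝓝 0) := by
  let b := stdOrthonormalBasis 𝕜 E
  have hcoord (j) : Tendsto (fun i => inner 𝕜 (b j) (q i)) l (𝓝 0) := by
    simpa only [← starRingEnd_apply, inner_conj_symm, map_zero] using (hq (b j)).star
  have h := tendsto_finsetSum Finset.univ fun j _ => (hcoord j).smul_const (b j)
  simpa only [b.sum_repr', zero_smul, Finset.sum_const_zero] using h

lemma Submodule.tendsto_zero_of_forall_inner_tendsto_zero (K : Submodule 𝕜 E)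
    [FiniteDimensional 𝕜 K] {q : ι → E} (hqK : ∀ i, q i ∈ K)
    (hq : ∀ y, Tendsto (fun i => inner 𝕜 (q i) y) l (𝓝 0)) : Tendsto q l (𝓝 0) := by
  have h : Tendsto (fun i => (⟨q i, hqK i⟩ : K)) l (𝓝 0) :=
    _root_.tendsto_zero_of_forall_inner_tendsto_zero fun y => hq (y : E)
  exact (continuous_subtype_val.tendsto 0).comp h

lemma ContinuousLinearMap.tendsto_inner_apply_of_tendsto_inner {F : Type*} [CompleteSpace E]
    [NormedAddCommGroup F] [InnerProductSpace 𝕜 F] [CompleteSpace F] (A : E →L[𝕜] F) {u : ι → E}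
    (hu : ∀ v, Tendsto (fun i => inner 𝕜 (u i) v) l (𝓝 0)) :
    ∀ y, Tendsto (fun i => inner 𝕜 (A (u i)) y) l (𝓝 0) := fun y => by
  simpa only [adjoint_inner_right] using hu (adjoint A y)

lemma norm_sq_le_re_inner_add_self {H : E →L[𝕜] E} (hH : ∀ x, 0 ≤ RCLike.re (inner 𝕜 x (H x)))
    (w : E) : ‖w‖ ^ 2 ≤ RCLike.re (inner 𝕜 w (H w + w)) := by
  rw [inner_add_right, map_add, inner_self_eq_norm_sq]
  linarith [hH w]

lemma tendsto_norm_sub_smul_of_tendsto_inner {H Res : E →L[𝕜] E}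
    (hH : ∀ x, 0 ≤ RCLike.re (inner 𝕜 x (H x))) (hRes : ∀ x, H (Res x) + Res x = x)
    {μ : 𝕜} {u : ι → E}
    (h1 : Tendsto (fun i => inner 𝕜 (Res (u i)) (H (u i) - μ • u i)) l (𝓝 0))
    (h2 : Tendsto (fun i => inner 𝕜 (u i) (H (u i) - μ • u i)) l (𝓝 0)) :
    Tendsto (fun i => ‖H (u i) - μ • u i‖) l (𝓝 0) := by
  set v := fun i => H (u i) - μ • u i
  set w := fun i => u i - (1 + μ) • Res (u i)
  have hw (i) : H (w i) + w i = v i := by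
    have hHRes := eq_sub_of_add_eq (hRes (u i))
    simp only [w, v, map_sub, map_smul, hHRes]
    module
  have hwv : Tendsto (fun i => inner 𝕜 (w i) (v i)) l (𝓝 0) := by
    simpa [w, inner_sub_left, inner_smul_left] using
      h2.sub (h1.const_mul (starRingEnd 𝕜 (1 + μ)))
  have hw_sq : Tendsto (fun i => ‖w i‖ ^ 2) l (𝓝 0) := by
    refine squeeze_zero (g := fun i => RCLike.re (inner 𝕜 (w i) (v i)))
      (fun _ => sq_nonneg _) (fun i => ?_) ?_
    · simpa only [hw] using norm_sq_le_re_inner_add_self hH (w i)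
    · exact (RCLike.continuous_re.tendsto' 0 0 (map_zero _)).comp hwv
  have hw0 : Tendsto (fun i => ‖w i‖) l (𝓝 0) := by
    simpa [Real.sqrt_sq (norm_nonneg _)] using hw_sq.sqrt
  refine squeeze_zero (fun _ => norm_nonneg _) (fun i => ?_)
    (by simpa using hw0.const_mul (‖H‖ + 1))
  calc ‖v i‖ = ‖H (w i) + w i‖ := by rw [hw]
    _ ≤ ‖H‖ * ‖w i‖ + ‖w i‖ := (norm_add_le _ _).trans (by gcongr; exact H.le_opNorm _)
    _ = (‖H‖ + 1) * ‖w i‖ := by ring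

end InnerProductSpace

theorem mem_essSpectrum_of_weylSequence (H : 𝓗 →L[ℂ] 𝓗) [IsStarNormal H] {z : ℂ}
    {ι : Type*} {l : Filter ι} [l.NeBot] {u : ι → 𝓗} (hnorm : ∀ i, ‖u i‖ = 1)
    (hHu : Tendsto (fun i => ‖H (u i) - z • u i‖) l (𝓝 0))
    (hweak : ∀ v, Tendsto (fun i => inner ℂ (u i) v) l (𝓝 0)) :
    z ∈ essSpectrum H := by
  refine ⟨mem_spectrum_of_tendsto_norm_sub_smul hnorm hHu, fun ⟨_, hiso, hfin⟩ => ?_⟩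
  set T := H - algebraMap ℂ (𝓗 →L[ℂ] 𝓗) z
  set G := cfc (fun w => (w - z)⁻¹) H
  have hT (x : 𝓗) : T x = H x - z • x := by simp [T]
  have hGT : Tendsto (fun i => ‖G (T (u i))‖) l (𝓝 0) := by
    refine squeeze_zero (fun _ => norm_nonneg _) (fun i => G.le_opNorm _) ?_
    simpa [hT] using hHu.const_mul ‖G‖
  have hker (i) : u i - G (T (u i)) ∈ Module.End.eigenspace (H : 𝓗 →ₗ[ℂ] 𝓗) z := by
    have h := congr($(sub_mul_cfc_inv_sub_mul_sub H hiso) (u i))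
    simp only [ContinuousLinearMap.mul_def, ContinuousLinearMap.comp_apply] at h
    have hTp : T (u i - G (T (u i))) = 0 := by rw [map_sub, h, sub_self]
    rw [hT, sub_eq_zero] at hTp
    exact Module.End.mem_eigenspace_iff.mpr hTp
  have heig : Tendsto (fun i => ‖u i - G (T (u i))‖) l (𝓝 0) := by
    refine tendsto_zero_iff_norm_tendsto_zero.mp
      (Submodule.tendsto_zero_of_forall_inner_tendsto_zero _ hker ?_)
    exact (1 - G * T).tendsto_inner_apply_of_tendsto_inner hweak
  have hsum : Tendsto (fun i => ‖u i - G (T (u i))‖ + ‖G (T (u i))‖) l (𝓝 0) := by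
    simpa using heig.add hGT
  obtain ⟨i, hi⟩ := (hsum.eventually_lt_const one_pos).exists
  linarith [hnorm i, norm_le_norm_add_norm_sub' (u i) (G (T (u i)))]

theorem stmt8_general (H Res : 𝓗 →L[ℂ] 𝓗) (hH : IsSelfAdjoint H)
    (hnonneg : ∀ x : 𝓗, 0 ≤ (inner ℂ x (H x) : ℂ).re)
    (hRes : ∀ x : 𝓗, Res (H x + x) = x ∧ H (Res x) + Res x = x)
    (lam : ℝ)
    (u : ℕ → 𝓗) (hnorm : ∀ i, ‖u i‖ = 1)
    (h1 : Tendsto (fun i => (inner ℂ (Res (u i)) (H (u i) - (lam : ℂ) • u i) : ℂ))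
      atTop (nhds 0))
    (h2 : Tendsto (fun i => (inner ℂ (u i) (H (u i) - (lam : ℂ) • u i) : ℂ))
      atTop (nhds 0))
    (hweak : ∀ v : 𝓗, Tendsto (fun i => (inner ℂ (u i) v : ℂ)) atTop (nhds 0)) :
    (lam : ℂ) ∈ essSpectrum H := by
  have : IsStarNormal H := hH.isStarNormal
  have hWeyl := tendsto_norm_sub_smul_of_tendsto_inner hnonneg (fun x => (hRes x).2) h1 h2
  exact mem_essSpectrum_of_weylSequence H hnorm hWeyl hweak

/-- generalized Weyl criterion, Charalambous–Lu. For a nonnegative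
self-adjoint `H` with resolvent `Res = (H+1)⁻¹` and `λ ≥ 0`: a normalized weak-null sequence
with `⟨(H+1)⁻¹u_i,(H-λ)u_i⟩ → 0` and `⟨u_i,(H-λ)u_i⟩ → 0` forces `λ ∈ σ_ess(H)`. -/
theorem stmt8 (H Res : 𝓗 →L[ℂ] 𝓗) (hH : IsSelfAdjoint H)
    (hnonneg : ∀ x : 𝓗, 0 ≤ (inner ℂ x (H x) : ℂ).re)
    (hRes : ∀ x : 𝓗, Res (H x + x) = x ∧ H (Res x) + Res x = x)
    (lam : ℝ) (hlam : 0 ≤ lam)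
    (u : ℕ → 𝓗) (hnorm : ∀ i, ‖u i‖ = 1)
    (h1 : Tendsto (fun i => (inner ℂ (Res (u i)) (H (u i) - (lam : ℂ) • u i) : ℂ))
      atTop (nhds 0))
    (h2 : Tendsto (fun i => (inner ℂ (u i) (H (u i) - (lam : ℂ) • u i) : ℂ))
      atTop (nhds 0))
    (hweak : ∀ v : 𝓗, Tendsto (fun i => (inner ℂ (u i) v : ℂ)) atTop (nhds 0)) :
    (lam : ℂ) ∈ essSpectrum H :=
  stmt8_general H Res hH hnonneg hRes lam u hnorm h1 h2 hweak
end
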